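/- There exists C > 0, depending only on the Schottky data, such that for every h ∈ (0,1], every ν ∈ [0,1/2], setting s := 1/2 − ν + i/h, every partition Z, and every function u continuous on D, holomorphic on the interior of D, and satisfying L_s u = u on the interior of D: sup over x ∈ I of |u(x)| ≤ C · Σ_{a ∈ Z} (sup over x ∈ I'_{ā} of |u(x)|). -/

import Mathlib

open Complex MeasureTheory Metric Set
open scoped Real

noncomputable section


abbrev SL2R := Matrix.SpecialLinearGroup (Fin 2) ℝ

/-- Entries of a matrix in `SL(2,ℝ)`, as complex numbers. -/
def mA (g : SL2R) : ℂ := ((g.1 0 0 : ℝ) : ℂ)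
def mB (g : SL2R) : ℂ := ((g.1 0 1 : ℝ) : ℂ)
def mC (g : SL2R) : ℂ := ((g.1 1 0 : ℝ) : ℂ)
def mD (g : SL2R) : ℂ := ((g.1 1 1 : ℝ) : ℂ)

/-- The Möbius action of `SL(2,ℝ)` on the Riemann sphere `ℂ ∪ {∞}`. -/
def moebius (g : SL2R) : OnePoint ℂ → OnePoint ℂ := fun z =>
  match z with
  | OnePoint.infty => if mC g = 0 then OnePoint.infty else ((mA g / mC g : ℂ) : OnePoint ℂ)
  | (w : ℂ) => if mC g * w + mD g = 0 then OnePoint.infty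
      else (((mA g * w + mB g) / (mC g * w + mD g) : ℂ) : OnePoint ℂ)

/-- The Möbius action on `ℂ`, with junk value at the pole. -/
def moebiusC (g : SL2R) (z : ℂ) : ℂ := (mA g * z + mB g) / (mC g * z + mD g)

/-- The Möbius action on `ℝ`, with junk value at the pole. -/
def moebiusR (g : SL2R) (x : ℝ) : ℝ :=
  (g.1 0 0 * x + g.1 0 1) / (g.1 1 0 * x + g.1 1 1)

/-- The complex derivative `γ'(z) = (cz+d)⁻²` of a Möbius transformation (`det = 1`). -/
def dMob (g : SL2R) (z : ℂ) : ℂ := ((mC g * z + mD g)⁻¹) ^ 2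

/-- The involution `a ↦ ā` on the alphabet `{1, …, 2r}` (as `Fin (2*r)`). -/
def bar {r : ℕ} (a : Fin (2 * r)) : Fin (2 * r) :=
  if h : (a : ℕ) < r then ⟨(a : ℕ) + r, by omega⟩
  else ⟨(a : ℕ) - r, by have := a.isLt; omega⟩

/-- Schottky data: `2r` pairwise disjoint closed disks centered on the real axis and
`2r` elements of `SL(2,ℝ)` with `γ_a((ℂ∪{∞}) \ interior D_{ā}) = D_a`, `γ_ā = γ_a⁻¹`. -/
structure Schottky (r : ℕ) where
  hr : 1 ≤ r
  center : Fin (2 * r) → ℝ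
  radius : Fin (2 * r) → ℝ
  radius_pos : ∀ a, 0 < radius a
  disj : Pairwise fun a b =>
    Disjoint (closedBall ((center a : ℝ) : ℂ) (radius a)) (closedBall ((center b : ℝ) : ℂ) (radius b))
  γ : Fin (2 * r) → SL2R
  γ_bar : ∀ a, γ (bar a) = (γ a)⁻¹
  γ_maps : ∀ a, moebius (γ a) ''
      (univ \ ((fun z : ℂ => (z : OnePoint ℂ)) '' interior (closedBall ((center (bar a) : ℝ) : ℂ) (radius (bar a)))))
    = (fun z : ℂ => (z : OnePoint ℂ)) '' closedBall ((center a : ℝ) : ℂ) (radius a)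

/-- Words: finite sequences of letters with `a_{j+1} ≠ ā_j`. -/
def IsWord {r : ℕ} (w : List (Fin (2 * r))) : Prop := w.Chain' fun x y => y ≠ bar x

/-- The word `ā := ā_n ⋯ ā_1`. -/
def barWord {r : ℕ} (w : List (Fin (2 * r))) : List (Fin (2 * r)) := (w.map bar).reverse

namespace Schottky

variable {r : ℕ} (S : Schottky r)

/-- The disk `D_a` for a letter `a`. -/
def disk (a : Fin (2 * r)) : Set ℂ := closedBall ((S.center a : ℝ) : ℂ) (S.radius a)

/-- `γ_w := γ_{a_1} ⋯ γ_{a_n}`. -/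
def g (w : List (Fin (2 * r))) : SL2R := (w.map S.γ).prod

/-- The disk `D_w := γ_{w'}(D_{a_n})` of a nonempty word, as a subset of the Riemann sphere. -/
def sdisk : List (Fin (2 * r)) → Set (OnePoint ℂ)
  | [] => ∅
  | a :: w => moebius (S.g ((a :: w).dropLast)) ''
      ((fun z : ℂ => (z : OnePoint ℂ)) '' S.disk ((a :: w).getLast (List.cons_ne_nil a w)))

/-- The disk `D_w` as a subset of `ℂ`. -/
def wdisk (w : List (Fin (2 * r))) : Set ℂ := {z : ℂ | (z : OnePoint ℂ) ∈ S.sdisk w}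

/-- The interval `I_w = D_w ∩ ℝ`, as a subset of `ℝ`. -/
def wint (w : List (Fin (2 * r))) : Set ℝ := {x : ℝ | ((x : ℝ) : ℂ) ∈ S.wdisk w}

/-- The length `|I_w|` of the interval `I_w`. -/
def wlen (w : List (Fin (2 * r))) : ℝ := Metric.diam (S.wint w)

/-- `D = ⋃_{a ∈ A} D_a`. -/
def D : Set ℂ := ⋃ a, S.disk a

/-- `I = D ∩ ℝ`, as a subset of `ℝ`. -/
def Ire : Set ℝ := {x : ℝ | ((x : ℝ) : ℂ) ∈ S.D}

/-- `D₂ = ⋃_{|w| = 2} D_w`. -/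
def D₂ : Set ℂ := ⋃ (a : Fin (2 * r)), ⋃ (b : Fin (2 * r)), ⋃ (_ : b ≠ bar a), S.wdisk [a, b]

/-- `I'_a` for a letter `a`: the convex hull of `⋃_{b ≠ ā} I_{ab}`. -/
def iprimeLetter (a : Fin (2 * r)) : Set ℝ :=
  convexHull ℝ (⋃ (b : Fin (2 * r)), ⋃ (_ : b ≠ bar a), S.wint [a, b])

/-- `I'_w := γ_{w'}(I'_{a_n})` for a nonempty word `w`. -/
def iprime : List (Fin (2 * r)) → Set ℝ
  | [] => ∅
  | a :: w => moebiusR (S.g ((a :: w).dropLast)) ''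
      S.iprimeLetter ((a :: w).getLast (List.cons_ne_nil a w))

/-- The partition `Z(τ)`. -/
def Ztau (τ : ℝ) : Set (List (Fin (2 * r))) :=
  {w | w ≠ [] ∧ IsWord w ∧ S.wlen w ≤ τ ∧ (w.dropLast = [] ∨ τ < S.wlen w.dropLast)}

/-- The limit set `Λ_Γ ⊂ ℝ`. -/
def limitSet : Set ℝ :=
  {x : ℝ | ∀ n : ℕ, 1 ≤ n → ∃ w : List (Fin (2 * r)), IsWord w ∧ w.length = n ∧ x ∈ S.wint w}

/-- The τ-neighbourhood `Λ_Γ(τ) ⊂ ℝ` of the limit set. -/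
def limitSetNbhd (τ : ℝ) : Set ℝ := {x : ℝ | ∃ y ∈ S.limitSet, |x - y| ≤ τ}

end Schottky

/-- `ℓ` is a holomorphic branch on `U` of the logarithm of the derivative of the Möbius
transformation of `g`, real on `U ∩ ℝ`. -/
structure IsLogBranch (g : SL2R) (U : Set ℂ) (ℓ : ℂ → ℂ) : Prop where
  holo : DifferentiableOn ℂ ℓ U
  exp_eq : ∀ z ∈ U, Complex.exp (ℓ z) = dMob g z
  real_on : ∀ x : ℝ, ((x : ℝ) : ℂ) ∈ U → (ℓ ((x : ℝ) : ℂ)).im = 0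

/-- A family of branches `ℓ a b` of `log γ_a'` on `D_b`, for all `a ≠ b̄`. -/
def IsBranchFamily {r : ℕ} (S : Schottky r) (ℓ : Fin (2 * r) → Fin (2 * r) → ℂ → ℂ) : Prop :=
  ∀ a b : Fin (2 * r), a ≠ bar b → IsLogBranch (S.γ a) (S.disk b) (ℓ a b)

/-- The fixed-point equation `L_s u = u` on the interior of `D`, written pointwise. -/
def TransferFixed {r : ℕ} (S : Schottky r) (s : ℂ)
    (ℓ : Fin (2 * r) → Fin (2 * r) → ℂ → ℂ) (u : ℂ → ℂ) : Prop :=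
  ∀ b : Fin (2 * r), ∀ z ∈ interior (S.disk b),
    u z = ∑ a : Fin (2 * r), if a ≠ bar b then
      Complex.exp (s * ℓ a b z) * u (moebiusC (S.γ a) z) else 0

/-- The transfer operator `L_s`, as an operator on functions. -/
def transferOp {r : ℕ} (S : Schottky r) (s : ℂ)
    (ℓ : Fin (2 * r) → Fin (2 * r) → ℂ → ℂ) (u : ℂ → ℂ) : ℂ → ℂ := fun z =>
  ∑ b : Fin (2 * r), (S.disk b).indicator
    (fun w => ∑ a : Fin (2 * r), if a ≠ bar b then
      Complex.exp (s * ℓ a b w) * u (moebiusC (S.γ a) w) else 0) z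

/-- A partition: a finite set of nonempty words such that every long enough word
has exactly one prefix in it. -/
def IsPartition {r : ℕ} (S : Schottky r) (Z : Finset (List (Fin (2 * r)))) : Prop :=
  (∀ w ∈ Z, w ≠ [] ∧ IsWord w) ∧
  ∃ N : ℕ, ∀ w : List (Fin (2 * r)), IsWord w → N ≤ w.length →
    ∃! p : List (Fin (2 * r)), p ∈ Z ∧ p <+: w

/-!
Start from `x ∈ I_b` and iterate `L_s u = u`: the value `u(γ_v x)` at a real point splits over
the letters `a` that can be prepended to `v`, with weights `exp(s ℓ)`. Because `ℓ` is real on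
the real axis, these weights have modulus `|γ_a'|^{Re s}`, independently of `Im s = 1/h`, and
along a branch they multiply to `|γ_{av}'(x)|^{Re s}`. Stopping every branch at the first `v`
with `v̄ ∈ Z` (which happens at bounded depth since `Z` is a partition) gives
`|u(x)| ≤ Σ_{w ∈ Z} |γ_{w̄}'(x)|^{Re s} |u(γ_{w̄} x)|`, and `γ_{w̄} x ∈ I'_{w̄}`.
As `0 ≤ Re s ≤ 1`, it remains to bound `|γ_v'|` on `D_b` uniformly in `v`: `γ_v` is
holomorphic on the `δ`-neighbourhood of `D_b`, `δ` the least gap between the disks, and maps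
it into a single disk `D_a`, so the Schwarz lemma
gives `|γ_v'| ≤ 2R/δ` for any bound `R` on the radii.
-/

section Words

variable {r : ℕ}

lemma bar_bar (a : Fin (2 * r)) : bar (bar a) = a := by
  have := a.isLt
  unfold bar
  split_ifs with h₁ h₂ h₂ <;> ext <;> simp only at h₂ ⊢ <;> omega

lemma isWord_iff {w : List (Fin (2 * r))} : IsWord w ↔ w.IsChain fun x y => y ≠ bar x :=
  Iff.rfl

lemma ne_bar_comm {a b : Fin (2 * r)} : a ≠ bar b ↔ b ≠ bar a := by
  constructor <;> rintro h rfl <;> exact h (bar_bar _).symm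

lemma barWord_barWord (w : List (Fin (2 * r))) : barWord (barWord w) = w := by
  simp [barWord, List.map_reverse, Function.comp_def, bar_bar]

lemma barWord_injective : Function.Injective (barWord (r := r)) :=
  Function.LeftInverse.injective barWord_barWord

lemma barWord_eq_nil {w : List (Fin (2 * r))} : barWord w = [] ↔ w = [] := by
  simp [barWord]

lemma List.IsPrefix.barWord_suffix {p w : List (Fin (2 * r))} (h : p <+: w) :
    barWord p <:+ barWord w :=
  List.reverse_suffix.mpr (h.map bar)

lemma IsWord.barWord {w : List (Fin (2 * r))} (h : IsWord w) : IsWord (_root_.barWord w) := by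
  rw [isWord_iff, _root_.barWord, List.isChain_reverse, List.isChain_map]
  exact List.IsChain.imp (fun a b hab hba => hab (by rw [hba, bar_bar])) h

lemma IsWord.of_append {v w : List (Fin (2 * r))} (h : IsWord (v ++ w)) : IsWord v :=
  (List.isChain_append.mp h).1

lemma isWord_cons_append {a b : Fin (2 * r)} {v : List (Fin (2 * r))} :
    IsWord (a :: v ++ [b]) ↔ v.headD b ≠ bar a ∧ IsWord (v ++ [b]) := by
  rw [List.cons_append, isWord_iff, List.isChain_cons, ← isWord_iff]
  cases v <;> simp [ne_bar_comm]

lemma IsWord.ne_bar_of_append {v : List (Fin (2 * r))} {c b : Fin (2 * r)}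
    (h : IsWord (v ++ [c] ++ [b])) : b ≠ bar c :=
  (List.isChain_append.mp h).2.2 c (by simp) b rfl

end Words

theorem le_sum_of_le_sum_cons {α : Type*} {P : List α → Prop} {Z : Finset (List α)}
    {F G : List α → ℝ} (hcover : ∃ N, ∀ v, P v → N ≤ v.length → ∃ q ∈ Z, q <:+ v)
    (hG : ∀ v ∈ Z, 0 ≤ G v) (hstop : ∀ v ∈ Z, P v → F v ≤ G v)
    (hstep : ∀ v, P v → v ∉ Z →
      ∃ s : Finset α, (∀ a ∈ s, P (a :: v)) ∧ F v ≤ ∑ a ∈ s, F (a :: v))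
    (hnil : P []) :
    F [] ≤ ∑ v ∈ Z, G v := by
  classical
  obtain ⟨N, hN⟩ := hcover
  have stop_le : ∀ v ∈ Z, P v → F v ≤ ∑ w ∈ Z with v <:+ w, G w := fun v hvZ hv =>
    (hstop v hvZ hv).trans <| Finset.single_le_sum (fun w hw => hG w (Finset.mem_filter.1 hw).1)
      (Finset.mem_filter.2 ⟨hvZ, List.suffix_refl v⟩)
  suffices key : ∀ n v, P v → (∀ q ∈ Z, q <:+ v → q = v) → N ≤ v.length + n →
      F v ≤ ∑ w ∈ Z with v <:+ w, G w by
    simpa using key N [] hnil (fun q _ hq => List.suffix_nil.mp hq) (by simp)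
  intro n
  induction n with
  | zero =>
    intro v hv hmin hlen
    obtain ⟨q, hqZ, hq⟩ := hN v hv hlen
    obtain rfl := hmin q hqZ hq
    exact stop_le q hqZ hv
  | succ n ih =>
    intro v hv hmin hlen
    by_cases hvZ : v ∈ Z
    · exact stop_le v hvZ hv
    obtain ⟨s, hs, hF⟩ := hstep v hv hvZ
    have hmin' : ∀ a, ∀ q ∈ Z, q <:+ a :: v → q = a :: v := fun a q hqZ hq =>
      (List.suffix_cons_iff.mp hq).resolve_right fun hqv => hvZ (hmin q hqZ hqv ▸ hqZ)
    have hdisj : (s : Set α).PairwiseDisjoint fun a => Z.filter (a :: v <:+ ·) := by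
      intro a _ b _ hab
      refine Finset.disjoint_filter.2 fun w _ ha hb => hab ?_
      have := (List.suffix_of_suffix_length_le ha hb (by simp)).eq_of_length (by simp)
      exact List.head_eq_of_cons_eq this
    calc F v ≤ ∑ a ∈ s, F (a :: v) := hF
      _ ≤ ∑ a ∈ s, ∑ w ∈ Z with a :: v <:+ w, G w :=
        Finset.sum_le_sum fun a ha => ih (a :: v) (hs a ha) (hmin' a) (by simp; omega)
      _ = ∑ w ∈ s.biUnion fun a => Z.filter (a :: v <:+ ·), G w := (Finset.sum_biUnion hdisj).symm
      _ ≤ ∑ w ∈ Z with v <:+ w, G w := by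
        refine Finset.sum_le_sum_of_subset_of_nonneg ?_ fun w hw _ =>
          hG w (Finset.mem_filter.1 hw).1
        intro w hw
        obtain ⟨a, -, hw⟩ := Finset.mem_biUnion.1 hw
        obtain ⟨hwZ, hvw⟩ := Finset.mem_filter.1 hw
        exact Finset.mem_filter.2 ⟨hwZ, (List.suffix_cons a v).trans hvw⟩

section Moebius

variable (g g₁ g₂ : SL2R) {z : ℂ}

lemma SL2R.mul_apply (i j : Fin 2) :
    (g₁ * g₂).1 i j = g₁.1 i 0 * g₂.1 0 j + g₁.1 i 1 * g₂.1 1 j := by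
  rw [Matrix.SpecialLinearGroup.coe_mul, Matrix.mul_apply, Fin.sum_univ_two]

lemma mA_mul : mA (g₁ * g₂) = mA g₁ * mA g₂ + mB g₁ * mC g₂ := by
  simp [mA, mB, mC, SL2R.mul_apply]

lemma mB_mul : mB (g₁ * g₂) = mA g₁ * mB g₂ + mB g₁ * mD g₂ := by
  simp [mA, mB, mD, SL2R.mul_apply]

lemma mC_mul : mC (g₁ * g₂) = mC g₁ * mA g₂ + mD g₁ * mC g₂ := by
  simp [mA, mC, mD, SL2R.mul_apply]

lemma mD_mul : mD (g₁ * g₂) = mC g₁ * mB g₂ + mD g₁ * mD g₂ := by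
  simp [mB, mC, mD, SL2R.mul_apply]

lemma mA_mul_mD_sub : mA g * mD g - mB g * mC g = 1 := by
  have := g.2
  rw [Matrix.det_fin_two] at this
  simp only [mA, mB, mC, mD]
  exact_mod_cast this

def moebiusDen (z : ℂ) : ℂ := mC g * z + mD g

lemma moebiusC_eq_div : moebiusC g z = (mA g * z + mB g) / moebiusDen g z := rfl

lemma dMob_eq : dMob g z = (moebiusDen g z)⁻¹ ^ 2 := rfl

lemma moebiusDen_mul (h : moebiusDen g₂ z ≠ 0) :
    moebiusDen (g₁ * g₂) z = moebiusDen g₂ z * moebiusDen g₁ (moebiusC g₂ z) := by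
  simp only [moebiusDen, moebiusC, mC_mul, mD_mul] at h ⊢
  field_simp
  ring

lemma moebiusC_mul (h : moebiusDen g₂ z ≠ 0) :
    moebiusC (g₁ * g₂) z = moebiusC g₁ (moebiusC g₂ z) := by
  have hnum : mA (g₁ * g₂) * z + mB (g₁ * g₂) =
      moebiusDen g₂ z * (mA g₁ * moebiusC g₂ z + mB g₁) := by
    simp only [moebiusDen, moebiusC, mA_mul, mB_mul] at h ⊢
    field_simp
    ring
  rw [moebiusC_eq_div, moebiusDen_mul g₁ g₂ h, hnum, mul_div_mul_left _ _ h, moebiusC_eq_div g₁]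

lemma dMob_mul (h : moebiusDen g₂ z ≠ 0) :
    dMob (g₁ * g₂) z = dMob g₁ (moebiusC g₂ z) * dMob g₂ z := by
  rw [dMob_eq, dMob_eq, dMob_eq, moebiusDen_mul g₁ g₂ h]
  ring

@[simp] lemma moebiusC_one (z : ℂ) : moebiusC 1 z = z := by
  simp [moebiusC, mA, mB, mC, mD]

@[simp] lemma moebiusDen_one (z : ℂ) : moebiusDen 1 z = 1 := by
  simp [moebiusDen, mC, mD]

@[simp] lemma dMob_one (z : ℂ) : dMob 1 z = 1 := by
  simp [dMob, mC, mD]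

lemma moebius_coe (h : moebiusDen g z ≠ 0) : moebius g z = moebiusC g z := by
  simp only [moebius, moebiusC]
  exact if_neg h

lemma moebiusC_ofReal (x : ℝ) : moebiusC g x = moebiusR g x := by
  simp [moebiusC, moebiusR, mA, mB, mC, mD]

lemma moebiusR_mul {x : ℝ} (h : moebiusDen g₂ x ≠ 0) :
    moebiusR (g₁ * g₂) x = moebiusR g₁ (moebiusR g₂ x) := by
  apply Complex.ofReal_injective
  rw [← moebiusC_ofReal, ← moebiusC_ofReal, ← moebiusC_ofReal, moebiusC_mul g₁ g₂ h]

lemma hasDerivAt_moebiusC (h : moebiusDen g z ≠ 0) :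
    HasDerivAt (moebiusC g) (dMob g z) z := by
  have hnum : HasDerivAt (fun w => mA g * w + mB g) (mA g) z := by
    simpa using ((hasDerivAt_id z).const_mul (mA g)).add_const (mB g)
  have hden : HasDerivAt (fun w => mC g * w + mD g) (mC g) z := by
    simpa using ((hasDerivAt_id z).const_mul (mC g)).add_const (mD g)
  refine (hnum.div hden h).congr_deriv ?_
  rw [dMob_eq, moebiusDen, inv_pow, ← one_div]
  congr 1
  linear_combination mA_mul_mD_sub g

end Moebius

open Filter Topology

namespace Schottky

variable {r : ℕ} (S : Schottky r)

@[simp] lemma g_nil : S.g [] = 1 := rfl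

@[simp] lemma g_cons (a : Fin (2 * r)) (v : List (Fin (2 * r))) :
    S.g (a :: v) = S.γ a * S.g v := by
  simp [g]

@[simp] lemma g_singleton (a : Fin (2 * r)) : S.g [a] = S.γ a := by
  simp [g]

@[simp] lemma g_append (v w : List (Fin (2 * r))) : S.g (v ++ w) = S.g v * S.g w := by
  simp [g]

lemma disk_subset_D (a : Fin (2 * r)) : S.disk a ⊆ S.D := subset_iUnion S.disk a

lemma isCompact_D : IsCompact S.D := isCompact_iUnion fun _ => isCompact_closedBall _ _

lemma not_mem_interior_disk {a b : Fin (2 * r)} (h : a ≠ b) {z : ℂ} (hz : z ∈ S.disk a) :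
    z ∉ interior (S.disk b) := fun hz' => (S.disj h).notMem_of_mem_left hz (interior_subset hz')

lemma moebiusC_γ_mem_disk (a : Fin (2 * r)) {z : ℂ} (hz : z ∉ interior (S.disk (bar a))) :
    moebiusDen (S.γ a) z ≠ 0 ∧ moebiusC (S.γ a) z ∈ S.disk a := by
  have himg : moebius (S.γ a) z ∈ ((↑) : ℂ → OnePoint ℂ) '' S.disk a := by
    rw [disk, ← S.γ_maps a]
    refine mem_image_of_mem _ ⟨trivial, ?_⟩
    rintro ⟨w, hw, hwz⟩
    exact hz (OnePoint.coe_injective hwz ▸ hw)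
  have hden : moebiusDen (S.γ a) z ≠ 0 := by
    intro h
    obtain ⟨w, -, hw⟩ := himg
    simp only [moebius] at hw
    exact OnePoint.coe_ne_infty w (hw.trans (if_pos h))
  obtain ⟨w, hw, hwz⟩ := himg
  rw [moebius_coe _ hden] at hwz
  exact ⟨hden, OnePoint.coe_injective hwz ▸ hw⟩

lemma moebiusC_word_mem_disk {v : List (Fin (2 * r))} {c : Fin (2 * r)} (hv : IsWord (v ++ [c]))
    {z : ℂ} (hz : z ∉ interior (S.disk (bar c))) :
    moebiusDen (S.g (v ++ [c])) z ≠ 0 ∧ moebiusC (S.g (v ++ [c])) z ∈ S.disk (v.headD c) := by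
  induction v with
  | nil => simpa using S.moebiusC_γ_mem_disk c hz
  | cons a v ih =>
    obtain ⟨hhead, hv⟩ := isWord_cons_append.1 hv
    obtain ⟨hden, hmem⟩ := ih hv
    obtain ⟨hden', hmem'⟩ := S.moebiusC_γ_mem_disk a (S.not_mem_interior_disk hhead hmem)
    rw [List.cons_append, g_cons, moebiusDen_mul _ _ hden, moebiusC_mul _ _ hden]
    exact ⟨mul_ne_zero hden hden', hmem'⟩

lemma moebiusC_mem_disk {v : List (Fin (2 * r))} {b : Fin (2 * r)} (hv : IsWord (v ++ [b]))
    {z : ℂ} (hz : z ∈ S.disk b) :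
    moebiusDen (S.g v) z ≠ 0 ∧ moebiusC (S.g v) z ∈ S.disk (v.headD b) := by
  rcases v.eq_nil_or_concat' with rfl | ⟨v, c, rfl⟩
  · simpa using hz
  · simpa using S.moebiusC_word_mem_disk hv.of_append
      (S.not_mem_interior_disk hv.ne_bar_of_append hz)

lemma iprime_concat (v : List (Fin (2 * r))) (c : Fin (2 * r)) :
    S.iprime (v ++ [c]) = moebiusR (S.g v) '' S.iprimeLetter c := by
  have key : ∀ w (hw : w ≠ []),
      S.iprime w = moebiusR (S.g w.dropLast) '' S.iprimeLetter (w.getLast hw) := by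
    rintro (_ | _) hw
    exacts [absurd rfl hw, rfl]
  simpa using key (v ++ [c]) (by simp)

lemma sdisk_pair (a c : Fin (2 * r)) :
    S.sdisk [a, c] = moebius (S.γ a) '' ((↑) '' S.disk c) := by
  simp [sdisk]

lemma ofReal_preimage_disk (a : Fin (2 * r)) :
    {t : ℝ | (t : ℂ) ∈ S.disk a} = closedBall (S.center a) (S.radius a) := by
  ext t
  simp [disk, Complex.dist_eq, ← Complex.ofReal_sub, Real.dist_eq]

lemma iprimeLetter_subset (a : Fin (2 * r)) :
    S.iprimeLetter a ⊆ {t : ℝ | (t : ℂ) ∈ S.disk a} := by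
  rw [S.ofReal_preimage_disk]
  refine convexHull_min (iUnion₂_subset fun c hc t ht => ?_) (convex_closedBall _ _)
  have ht : ((t : ℂ) : OnePoint ℂ) ∈ S.sdisk [a, c] := ht
  rw [sdisk_pair] at ht
  obtain ⟨_, ⟨w, hw, rfl⟩, hwt⟩ := ht
  obtain ⟨hden, hmem⟩ := S.moebiusC_γ_mem_disk a (S.not_mem_interior_disk hc hw)
  rw [moebius_coe _ hden] at hwt
  rw [← S.ofReal_preimage_disk]
  show (t : ℂ) ∈ S.disk a
  rwa [← OnePoint.coe_injective hwt]

lemma moebiusR_mem_iprime {v : List (Fin (2 * r))} {c b : Fin (2 * r)}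
    (hv : IsWord (v ++ [c] ++ [b])) {x : ℝ} (hx : (x : ℂ) ∈ S.disk b) :
    moebiusR (S.g (v ++ [c])) x ∈ S.iprime (v ++ [c]) := by
  have hbc := hv.ne_bar_of_append
  obtain ⟨hden, -⟩ := S.moebiusC_γ_mem_disk c (S.not_mem_interior_disk hbc hx)
  rw [iprime_concat, g_append, g_singleton, moebiusR_mul _ _ hden]
  refine mem_image_of_mem _ (subset_convexHull ℝ _ (mem_iUnion₂.2 ⟨b, hbc, ?_⟩))
  show ((moebiusR (S.γ c) x : ℂ) : OnePoint ℂ) ∈ S.sdisk [c, b]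
  rw [sdisk_pair, ← moebiusC_ofReal, ← moebius_coe _ hden]
  exact mem_image_of_mem _ (mem_image_of_mem _ hx)

lemma ofReal_mem_D_of_mem_iprime {v : List (Fin (2 * r))} {c : Fin (2 * r)}
    (hv : IsWord (v ++ [c])) {t : ℝ} (ht : t ∈ S.iprime (v ++ [c])) : (t : ℂ) ∈ S.D := by
  rw [iprime_concat] at ht
  obtain ⟨t, ht, rfl⟩ := ht
  rw [← moebiusC_ofReal]
  exact S.disk_subset_D _ (S.moebiusC_mem_disk hv (S.iprimeLetter_subset c ht)).2

lemma exists_thickening_disjoint :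
    ∃ δ > 0, ∀ a b : Fin (2 * r), a ≠ b → Disjoint (thickening δ (S.disk b)) (S.disk a) := by
  have h : ∀ a b : Fin (2 * r), ∀ᶠ δ in 𝓝[>] (0 : ℝ),
      a ≠ b → Disjoint (thickening δ (S.disk b)) (S.disk a) := by
    intro a b
    by_cases hab : a = b
    · simp [hab]
    obtain ⟨δ, hδ, hd⟩ := (S.disj (Ne.symm hab)).exists_thickenings (isCompact_closedBall _ _)
      isClosed_closedBall
    filter_upwards [Ioo_mem_nhdsGT hδ] with ε hε _
    exact (hd.mono_left (thickening_mono hε.2.le _)).mono_right (self_subset_thickening hδ _)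
  obtain ⟨δ, hδ, hpos⟩ :=
    ((eventually_all.2 fun a => eventually_all.2 (h a)).and
      self_mem_nhdsWithin).exists
  exact ⟨δ, hpos, hδ⟩

lemma exists_norm_dMob_le :
    ∃ C ≥ 1, ∀ (v : List (Fin (2 * r))) (b : Fin (2 * r)), IsWord (v ++ [b]) →
      ∀ z ∈ S.disk b, ‖dMob (S.g v) z‖ ≤ C := by
  obtain ⟨δ, hδ, hgap⟩ := S.exists_thickening_disjoint
  set R := ∑ a, S.radius a
  have hR : ∀ a, S.radius a ≤ R := fun a =>
    Finset.single_le_sum (fun a _ => (S.radius_pos a).le) (Finset.mem_univ a)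
  refine ⟨max 1 (2 * R / δ), le_max_left _ _, fun v b hv x hx => ?_⟩
  rcases v.eq_nil_or_concat' with rfl | ⟨v, c, rfl⟩
  · simp
  set f := moebiusC (S.g (v ++ [c]))
  have hball : ∀ z ∈ ball x δ, moebiusDen (S.g (v ++ [c])) z ≠ 0 ∧ f z ∈ S.disk (v.headD c) :=
    fun z hz => S.moebiusC_word_mem_disk hv.of_append fun hz' =>
      (hgap _ _ hv.ne_bar_of_append.symm).notMem_of_mem_left (ball_subset_thickening hx δ hz)
        (interior_subset hz')
  have hdiff : DifferentiableOn ℂ f (ball x δ) := fun z hz =>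
    (hasDerivAt_moebiusC _ (hball z hz).1).differentiableAt.differentiableWithinAt
  have hmaps : MapsTo f (ball x δ) (closedBall (f x) (2 * R)) := by
    intro z hz
    have h₁ := (hball z hz).2
    have h₂ := (hball x (mem_ball_self hδ)).2
    rw [disk, mem_closedBall] at h₁ h₂
    rw [mem_closedBall]
    linarith [dist_triangle_right (f z) (f x) (S.center (v.headD c)), hR (v.headD c)]
  have hderiv := (hasDerivAt_moebiusC _ (hball x (mem_ball_self hδ)).1).deriv
  calc ‖dMob (S.g (v ++ [c])) x‖ = ‖deriv f x‖ := by rw [hderiv]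
    _ ≤ 2 * R / δ := Complex.norm_deriv_le_div_of_mapsTo_ball hdiff hmaps hδ
    _ ≤ _ := le_max_right _ _

end Schottky

lemma IsLogBranch.norm_exp_mul {g : SL2R} {U : Set ℂ} {ℓ : ℂ → ℂ} (hℓ : IsLogBranch g U ℓ)
    (s : ℂ) {x : ℝ} (hx : (x : ℂ) ∈ U) : ‖Complex.exp (s * ℓ x)‖ = ‖dMob g x‖ ^ s.re := by
  have hreal : ℓ x = ((ℓ x).re : ℂ) := Complex.ext rfl (by simp [hℓ.real_on x hx])
  rw [← hℓ.exp_eq x hx, hreal, Complex.norm_exp, Complex.norm_exp, ← Real.exp_mul]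
  simp [mul_comm]

lemma TransferFixed.eq_of_mem_disk {r : ℕ} {S : Schottky r} {s : ℂ}
    {ℓ : Fin (2 * r) → Fin (2 * r) → ℂ → ℂ} {u : ℂ → ℂ} (htf : TransferFixed S s ℓ u)
    (hℓ : IsBranchFamily S ℓ) (hu : ContinuousOn u S.D) {b : Fin (2 * r)} {z : ℂ}
    (hz : z ∈ S.disk b) :
    u z = ∑ a : Fin (2 * r), if a ≠ bar b then
      Complex.exp (s * ℓ a b z) * u (moebiusC (S.γ a) z) else 0 := by
  have hrad := (S.radius_pos b).ne'
  refine EqOn.of_subset_closure (fun z hz => htf b z ?_) (hu.mono (S.disk_subset_D b))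
    (continuousOn_finsetSum _ fun a _ => ?_) ball_subset_closedBall ?_ hz
  · rwa [Schottky.disk, interior_closedBall _ hrad]
  · split_ifs with hab
    · have hγ : ∀ w ∈ S.disk b, moebiusDen (S.γ a) w ≠ 0 ∧ moebiusC (S.γ a) w ∈ S.disk a :=
        fun w hw => S.moebiusC_γ_mem_disk a (S.not_mem_interior_disk (ne_bar_comm.1 hab) hw)
      refine ((hℓ a b hab).holo.continuousOn.const_smul s).cexp.mul (hu.comp ?_ ?_)
      · exact fun w hw => (hasDerivAt_moebiusC _ (hγ w hw).1).continuousAt.continuousWithinAt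
      · exact fun w hw => S.disk_subset_D a (hγ w hw).2
    · exact continuousOn_const
  · rw [closure_ball _ hrad]
    rfl

lemma Real.rpow_le_of_le_of_one_le {x C e : ℝ} (hx : 0 ≤ x) (hxC : x ≤ C) (hC : 1 ≤ C)
    (he₀ : 0 ≤ e) (he₁ : e ≤ 1) : x ^ e ≤ C := by
  rcases le_total x 1 with h | h
  · exact (Real.rpow_le_one hx h he₀).trans hC
  · exact (Real.rpow_le_self_of_one_le h he₁).trans hxC

namespace Schottky

variable {r : ℕ} (S : Schottky r)

lemma norm_moebiusC_le_sSup_iprime {u : ℂ → ℂ} (hu : ContinuousOn u S.D)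
    {v : List (Fin (2 * r))} {c b : Fin (2 * r)} (hv : IsWord (v ++ [c] ++ [b])) {x : ℝ}
    (hx : (x : ℂ) ∈ S.disk b) :
    ‖u (moebiusC (S.g (v ++ [c])) x)‖ ≤ sSup ((fun t : ℝ => ‖u t‖) '' S.iprime (v ++ [c])) := by
  obtain ⟨B, hB⟩ := S.isCompact_D.exists_bound_of_continuousOn hu
  have hbdd : BddAbove ((fun t : ℝ => ‖u t‖) '' S.iprime (v ++ [c])) :=
    ⟨B, by rintro _ ⟨t, ht, rfl⟩; exact hB _ (S.ofReal_mem_D_of_mem_iprime hv.of_append ht)⟩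
  rw [moebiusC_ofReal]
  exact le_csSup hbdd (mem_image_of_mem _ (S.moebiusR_mem_iprime hv hx))

lemma norm_dMob_rpow_mul_le_sum_cons {s : ℂ} {ℓ : Fin (2 * r) → Fin (2 * r) → ℂ → ℂ}
    (hℓ : IsBranchFamily S ℓ) {u : ℂ → ℂ} (hu : ContinuousOn u S.D)
    (htf : TransferFixed S s ℓ u) {v : List (Fin (2 * r))} {b : Fin (2 * r)}
    (hv : IsWord (v ++ [b])) {x : ℝ} (hx : (x : ℂ) ∈ S.disk b) :
    ‖dMob (S.g v) x‖ ^ s.re * ‖u (moebiusC (S.g v) x)‖ ≤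
      ∑ a ∈ Finset.univ.filter (· ≠ bar (v.headD b)),
        ‖dMob (S.g (a :: v)) x‖ ^ s.re * ‖u (moebiusC (S.g (a :: v)) x)‖ := by
  obtain ⟨hden, hmem⟩ := S.moebiusC_mem_disk hv hx
  set c := v.headD b
  have ht : moebiusC (S.g v) x = (moebiusR (S.g v) x : ℂ) := moebiusC_ofReal _ _
  rw [ht] at hmem
  set t := moebiusR (S.g v) x
  calc ‖dMob (S.g v) x‖ ^ s.re * ‖u (moebiusC (S.g v) x)‖
      = ‖dMob (S.g v) x‖ ^ s.re * ‖∑ a, if a ≠ bar c then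
          Complex.exp (s * ℓ a c t) * u (moebiusC (S.γ a) t) else 0‖ := by
        rw [← htf.eq_of_mem_disk hℓ hu hmem, ← ht]
    _ ≤ ‖dMob (S.g v) x‖ ^ s.re * ∑ a ∈ Finset.univ.filter (· ≠ bar c),
          ‖Complex.exp (s * ℓ a c t) * u (moebiusC (S.γ a) t)‖ := by
        rw [← Finset.sum_filter]
        gcongr
        exact norm_sum_le _ _
    _ = _ := by
        rw [Finset.mul_sum]
        refine Finset.sum_congr rfl fun a ha => ?_
        simp only [g_cons, dMob_mul _ _ hden, moebiusC_mul _ _ hden, ht, norm_mul,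
          (hℓ a c (Finset.mem_filter.1 ha).2).norm_exp_mul s hmem,
          Real.mul_rpow (norm_nonneg _) (norm_nonneg _)]
        ring

theorem norm_le_mul_sum_sSup_iprime {s : ℂ} (hs₀ : 0 ≤ s.re) (hs₁ : s.re ≤ 1)
    {Z : Finset (List (Fin (2 * r)))} (hZ : IsPartition S Z)
    {ℓ : Fin (2 * r) → Fin (2 * r) → ℂ → ℂ} (hℓ : IsBranchFamily S ℓ)
    {u : ℂ → ℂ} (hu : ContinuousOn u S.D) (htf : TransferFixed S s ℓ u) {C : ℝ} (hC₁ : 1 ≤ C)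
    (hC : ∀ (v : List (Fin (2 * r))) (b : Fin (2 * r)), IsWord (v ++ [b]) →
      ∀ z ∈ S.disk b, ‖dMob (S.g v) z‖ ≤ C)
    {x : ℝ} (hx : x ∈ S.Ire) :
    ‖u x‖ ≤ C * ∑ w ∈ Z, sSup ((fun t : ℝ => ‖u t‖) '' S.iprime (barWord w)) := by
  obtain ⟨b, hxb⟩ := mem_iUnion.1 hx
  have hcover : ∃ N, ∀ v, IsWord (v ++ [b]) → N ≤ v.length → ∃ q ∈ Z.image barWord, q <:+ v := by
    obtain ⟨N, hN⟩ := hZ.2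
    refine ⟨N, fun v hv hlen => ?_⟩
    obtain ⟨p, ⟨hpZ, hp⟩, -⟩ := hN (barWord v) hv.of_append.barWord (by simpa [barWord])
    exact ⟨barWord p, Finset.mem_image_of_mem _ hpZ, barWord_barWord v ▸ hp.barWord_suffix⟩
  have hstop : ∀ v ∈ Z.image barWord, IsWord (v ++ [b]) →
      ‖dMob (S.g v) x‖ ^ s.re * ‖u (moebiusC (S.g v) x)‖ ≤
        C * sSup ((fun t : ℝ => ‖u t‖) '' S.iprime v) := by
    intro v hvZ hv
    obtain ⟨w, hwZ, rfl⟩ := Finset.mem_image.1 hvZ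
    rcases (barWord w).eq_nil_or_concat' with hnil | ⟨v, c, hvc⟩
    · exact absurd (barWord_eq_nil.1 hnil) (hZ.1 w hwZ).1
    rw [hvc] at hv ⊢
    exact mul_le_mul (Real.rpow_le_of_le_of_one_le (norm_nonneg _) (hC _ b hv x hxb) hC₁ hs₀ hs₁)
      (S.norm_moebiusC_le_sSup_iprime hu hv hxb) (norm_nonneg _) (by linarith)
  calc ‖u x‖ = ‖dMob (S.g []) x‖ ^ s.re * ‖u (moebiusC (S.g []) x)‖ := by simp
    _ ≤ ∑ v ∈ Z.image barWord, C * sSup ((fun t : ℝ => ‖u t‖) '' S.iprime v) := by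
      refine le_sum_of_le_sum_cons hcover (fun v _ => ?_) hstop
        (fun v hv _ => ⟨_, fun a ha => isWord_cons_append.2
          ⟨ne_bar_comm.1 (Finset.mem_filter.1 ha).2, hv⟩,
          S.norm_dMob_rpow_mul_le_sum_cons hℓ hu htf hv hxb⟩) (by simp [isWord_iff])
      exact mul_nonneg (by linarith)
        (Real.sSup_nonneg (by rintro _ ⟨t, -, rfl⟩; exact norm_nonneg _))
    _ = _ := by
      rw [Finset.sum_image fun _ _ _ _ h => barWord_injective h, Finset.mul_sum]

end Schottky

/-- There is `C > 0` depending only on the Schottky data such that for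
`s = 1/2 − ν + i/h`, any partition `Z` and any `u` continuous on `D`, holomorphic on its
interior with `L_s u = u`: `sup_I |u| ≤ C Σ_{a ∈ Z} sup_{I'_{ā}} |u|`. -/
theorem stmt16 {r : ℕ} (S : Schottky r) :
    ∃ C : ℝ, 0 < C ∧
      ∀ h ∈ Set.Ioc (0 : ℝ) 1, ∀ ν ∈ Set.Icc (0 : ℝ) (1 / 2),
      ∀ Z : Finset (List (Fin (2 * r))), IsPartition S Z →
      ∀ ℓ : Fin (2 * r) → Fin (2 * r) → ℂ → ℂ, IsBranchFamily S ℓ →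
      ∀ u : ℂ → ℂ, ContinuousOn u S.D → DifferentiableOn ℂ u (interior S.D) →
        TransferFixed S (1 / 2 - ν + I / h) ℓ u →
      ∀ x ∈ S.Ire, ‖u ((x : ℝ) : ℂ)‖
        ≤ C * ∑ w ∈ Z, sSup ((fun t : ℝ => ‖u ((t : ℝ) : ℂ)‖) '' S.iprime (barWord w)) := by
  obtain ⟨C, hC₁, hC⟩ := S.exists_norm_dMob_le
  refine ⟨C, by linarith, fun h _ ν hν Z hZ ℓ hℓ u hu _ htf x hx => ?_⟩
  have hre : (1 / 2 - ν + I / h : ℂ).re = 1 / 2 - ν := by simp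
  exact S.norm_le_mul_sum_sSup_iprime (by rw [hre]; linarith [hν.2])
    (by rw [hre]; linarith [hν.1]) hZ hℓ hu htf hC₁ hC hx
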